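/- Let P be a Camina p-group of nilpotence class 3 with p odd and cyclic center Z(P). Then P' is elementary abelian. -/

import Mathlib

open scoped Pointwise

/-- A Camina group: a nonabelian group in which every coset of the derived subgroup
other than the derived subgroup itself is a single conjugacy class. -/
def IsCamina (P : Type*) [Group P] : Prop :=
  (¬ ∀ a b : P, a * b = b * a) ∧
  ∀ x : P, x ∉ commutator P → {y : P | IsConj x y} = x • (commutator P : Set P)

/-!
Write `N = γ₃(P) = [P', P]` (`lowerCentralSeries 2`: Mathlib indexes the series from `0`); it is
central since `γ₄(P) = 1`. The quotient `Q = P/N` has class two and inherits the Camina condition,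
so for `x ∉ Q'` the homomorphism `t ↦ [t, x]` maps `Q` onto `Q'` with kernel `C_Q(x)`. Hence every
`q ^ p` lies in `Q'` (otherwise the `p`-th power map of the `p`-group `Q'` would be onto), `Q'` has
exponent `p`, and, `p` being odd, `q ↦ q ^ p` is an endomorphism of `Q` with image in `Q'`. As
`|Q| = |C_Q(x)| |Q'|` and `Q' < C_Q(x)`, its kernel is not contained in `Q'`: some `y ∉ P'` has
`y ^ p ∈ N`.

Back in `P`, `N` has exponent `p` because `[v, s] ^ p = [v ^ p, s] = 1`. For `u ∈ P'` pick `t`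
with `t y t⁻¹ = u y`; as `y ^ p` is central, `y ^ p = (u y) ^ p = u ^ p y ^ p`, the correction
`[y, u] ^ (p choose 2)` vanishing because `[y, u] ∈ N` and `p ∣ p choose 2`. Finally
`[P', P'] = 1` by the three subgroups lemma.
-/

open Subgroup
open scoped commutatorElement

section CommutatorCalculus

variable {G : Type*} [Group G]

theorem pow_mul_eq_commutatorElement_pow_mul {u x : G} (hx : Commute ⁅x, u⁆ x) (n : ℕ) :
    x ^ n * u = ⁅x, u⁆ ^ n * u * x ^ n := by
  have hxu : x * u = ⁅x, u⁆ * u * x := by rw [commutatorElement_def]; group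
  induction n with
  | zero => simp
  | succ n ih =>
    calc x ^ (n + 1) * u = x ^ n * ⁅x, u⁆ * u * x := by rw [pow_succ, mul_assoc, hxu]; group
      _ = ⁅x, u⁆ * (x ^ n * u) * x := by rw [← (hx.pow_right n).eq]; group
      _ = ⁅x, u⁆ ^ (n + 1) * u * x ^ (n + 1) := by rw [ih]; group

theorem mul_pow_eq_commutatorElement_pow_choose_two_mul {u x : G} (hu : Commute ⁅x, u⁆ u)
    (hx : Commute ⁅x, u⁆ x) (n : ℕ) :
    (u * x) ^ n = ⁅x, u⁆ ^ n.choose 2 * u ^ n * x ^ n := by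
  induction n with
  | zero => simp
  | succ n ih =>
    calc (u * x) ^ (n + 1)
          = ⁅x, u⁆ ^ n.choose 2 * (u ^ n * ⁅x, u⁆ ^ n) * u * x ^ n * x := by
          rw [pow_succ, ih, ← mul_assoc, mul_assoc _ (x ^ n) u,
            pow_mul_eq_commutatorElement_pow_mul hx]; group
      _ = ⁅x, u⁆ ^ (n.choose 2 + n) * u ^ (n + 1) * x ^ (n + 1) := by
        rw [← (hu.pow_pow n n).eq]; group
      _ = ⁅x, u⁆ ^ (n + 1).choose 2 * u ^ (n + 1) * x ^ (n + 1) := by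
        rw [Nat.choose_succ_succ, Nat.choose_one_right, Nat.add_comm n (n.choose _)]

theorem commutatorElement_pow_left_of_commute {a b : G} (h : Commute a ⁅a, b⁆) (n : ℕ) :
    ⁅a ^ n, b⁆ = ⁅a, b⁆ ^ n := by
  induction n with
  | zero => simp
  | succ n ih =>
    rw [pow_succ', commutatorElement_mul_left_eq_conj_mul, ih, (h.pow_right n).eq,
      mul_inv_cancel_right, pow_succ]

theorem pow_choose_two_eq_one_of_odd {p : ℕ} (hp : Odd p) {z : G} (hz : z ^ p = 1) :
    z ^ p.choose 2 = 1 := by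
  obtain ⟨k, rfl⟩ := hp
  rw [Nat.choose_two_right, Nat.add_sub_cancel, mul_left_comm, Nat.mul_div_cancel_left _ two_pos,
    pow_mul, hz, one_pow]

end CommutatorCalculus

section CentralCommutators

variable {G : Type*} [Group G]

theorem commutatorElement_mem_center (hG : commutator G ≤ center G) (a b : G) :
    ⁅a, b⁆ ∈ center G :=
  hG (commutator_mem_commutator (mem_top a) (mem_top b))

theorem commutatorElement_pow_left (hG : commutator G ≤ center G) (a b : G) (n : ℕ) :
    ⁅a ^ n, b⁆ = ⁅a, b⁆ ^ n :=
  commutatorElement_pow_left_of_commute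
    (mem_center_iff.mp (commutatorElement_mem_center hG a b) a) n

theorem commutatorElement_pow_right (hG : commutator G ≤ center G) (a b : G) (n : ℕ) :
    ⁅a, b ^ n⁆ = ⁅a, b⁆ ^ n := by
  rw [← commutatorElement_inv, commutatorElement_pow_left hG, ← inv_pow, commutatorElement_inv]

def commutatorLeftHom (hG : commutator G ≤ center G) (x : G) : G →* G :=
  MonoidHom.mk' (⁅·, x⁆) fun s t => by
    rw [commutatorElement_mul_left_eq_conj_mul,
      mem_center_iff.mp (commutatorElement_mem_center hG t x) s, mul_inv_cancel_right,
      mem_center_iff.mp (commutatorElement_mem_center hG s x)]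

theorem commutatorLeftHom_apply (hG : commutator G ≤ center G) (x t : G) :
    commutatorLeftHom hG x t = ⁅t, x⁆ := rfl

theorem ker_commutatorLeftHom (hG : commutator G ≤ center G) (x : G) :
    (commutatorLeftHom hG x).ker = centralizer {x} := by
  ext t
  rw [MonoidHom.mem_ker, commutatorLeftHom_apply, commutatorElement_eq_one_iff_commute,
    mem_centralizer_singleton_iff]
  exact commute_iff_eq t x

theorem mul_pow_of_commutator_le_center {p : ℕ} (hp : Odd p) (hG : commutator G ≤ center G)
    (hexp : ∀ u ∈ commutator G, u ^ p = 1) (a b : G) : (a * b) ^ p = a ^ p * b ^ p := by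
  have hba := commutatorElement_mem_center hG b a
  rw [mul_pow_eq_commutatorElement_pow_choose_two_mul (mem_center_iff.mp hba a).symm
    (mem_center_iff.mp hba b).symm, pow_choose_two_eq_one_of_odd hp
    (hexp _ (commutator_mem_commutator (mem_top b) (mem_top a))), one_mul]

theorem exists_notMem_commutator (hG : commutator G ≤ center G) (hne : commutator G ≠ ⊥) :
    ∃ x, x ∉ commutator G := by
  by_contra! h
  exact hne ((commutator_eq_bot_iff_center_eq_top G).mpr (top_le_iff.mp fun x _ => hG (h x)))

end CentralCommutators

/-- The Camina condition `x ^ G = x G'` for `x ∉ G'`, in the form: `⁅·, x⁆` maps onto `G'`. -/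
def CaminaCondition (G : Type*) [Group G] : Prop :=
  ∀ x ∉ commutator G, ∀ u ∈ commutator G, ∃ t : G, ⁅t, x⁆ = u

section CaminaCondition

variable {G : Type*} [Group G]

theorem IsCamina.caminaCondition (h : IsCamina G) : CaminaCondition G := by
  intro x hx u hu
  have hux : u * x ∈ x • (commutator G : Set G) :=
    ⟨x⁻¹ * u * x, (commutator G).normal_of_characteristic.conj_mem' u hu x, by
      simp [mul_assoc]⟩
  rw [← h.2 x hx] at hux
  obtain ⟨t, ht⟩ := isConj_iff.mp hux
  exact ⟨t, by rw [commutatorElement_def, ht, mul_inv_cancel_right]⟩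

theorem map_commutator_of_surjective {H : Type*} [Group H] {f : G →* H}
    (hf : Function.Surjective f) : (commutator G).map f = commutator H := by
  simpa only [derivedSeries_one] using map_derivedSeries_eq hf 1

theorem CaminaCondition.of_surjective {H : Type*} [Group H] {f : G →* H}
    (hf : Function.Surjective f) (hCam : CaminaCondition G) : CaminaCondition H := by
  intro y hy v hv
  obtain ⟨x, rfl⟩ := hf y
  rw [← map_commutator_of_surjective hf] at hy hv
  obtain ⟨u, hu, rfl⟩ := hv
  obtain ⟨t, rfl⟩ := hCam x (fun hx => hy (mem_map_of_mem f hx)) u hu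
  exact ⟨f t, (map_commutatorElement f t x).symm⟩

theorem CaminaCondition.card_eq_card_centralizer_mul_card_commutator (hCam : CaminaCondition G)
    (hG : commutator G ≤ center G) {x : G} (hx : x ∉ commutator G) :
    Nat.card G = Nat.card (centralizer {x}) * Nat.card (commutator G) := by
  have hrange : (commutatorLeftHom hG x).range = commutator G := by
    ext u
    constructor
    · rintro ⟨t, rfl⟩
      exact commutator_mem_commutator (mem_top t) (mem_top x)
    · intro hu
      obtain ⟨t, rfl⟩ := hCam x hx u hu
      exact ⟨t, rfl⟩
  rw [← (commutatorLeftHom hG x).ker.card_mul_index, index_ker, ker_commutatorLeftHom, hrange]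

end CaminaCondition

theorem IsPGroup.eq_bot_of_forall_exists_pow_eq {p : ℕ} {G : Type*} [Group G] [Finite G]
    (hG : IsPGroup p G) {H : Subgroup G} (hH : ∀ h ∈ H, ∃ k ∈ H, k ^ p = h) : H = ⊥ := by
  obtain ⟨n, hn⟩ := isPGroup_iff_exists_pow_pow_eq_one.mp hG
  have hpow : ∀ m, ∀ h ∈ H, ∃ k ∈ H, k ^ p ^ m = h := by
    intro m
    induction m with
    | zero => exact fun h hh => ⟨h, hh, by rw [pow_zero, pow_one]⟩
    | succ m ih =>
      intro h hh
      obtain ⟨k, hk, rfl⟩ := hH h hh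
      obtain ⟨l, hl, rfl⟩ := ih k hk
      exact ⟨l, hl, by rw [pow_succ, pow_mul]⟩
  refine eq_bot_iff.mpr fun h hh => ?_
  obtain ⟨k, -, rfl⟩ := hpow n h hh
  exact mem_bot.mpr (hn k)

namespace CaminaCondition

variable {p : ℕ} {G : Type*} [Group G] [Finite G]

theorem pow_mem_commutator (hCam : CaminaCondition G) (hGp : IsPGroup p G)
    (hG : commutator G ≤ center G) (hne : commutator G ≠ ⊥) (y : G) :
    y ^ p ∈ commutator G := by
  by_contra hy
  refine hne (hGp.eq_bot_of_forall_exists_pow_eq fun u hu => ?_)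
  obtain ⟨t, rfl⟩ := hCam _ hy u hu
  exact ⟨⁅t, y⁆, commutator_mem_commutator (mem_top t) (mem_top y),
    (commutatorElement_pow_right hG t y p).symm⟩

theorem pow_eq_one_of_mem_commutator (hCam : CaminaCondition G) (hGp : IsPGroup p G)
    (hG : commutator G ≤ center G) (hne : commutator G ≠ ⊥) {u : G}
    (hu : u ∈ commutator G) : u ^ p = 1 := by
  obtain ⟨x, hx⟩ := exists_notMem_commutator hG hne
  obtain ⟨t, rfl⟩ := hCam x hx u hu
  rw [← commutatorElement_pow_left hG, commutatorElement_eq_one_iff_commute]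
  exact (mem_center_iff.mp (hG (hCam.pow_mem_commutator hGp hG hne t)) x).symm

theorem exists_notMem_commutator_pow_eq_one (hCam : CaminaCondition G) (hp : Odd p)
    (hGp : IsPGroup p G) (hG : commutator G ≤ center G) (hne : commutator G ≠ ⊥) :
    ∃ y ∉ commutator G, y ^ p = 1 := by
  obtain ⟨x, hx⟩ := exists_notMem_commutator hG hne
  let powHom : G →* G := MonoidHom.mk' (· ^ p) (mul_pow_of_commutator_le_center hp hG
    fun _ hu => hCam.pow_eq_one_of_mem_commutator hGp hG hne hu)
  by_contra! h
  have hker : powHom.ker ≤ commutator G := fun y hy => by_contra fun hy' => h y hy' hy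
  have hrange : powHom.range ≤ commutator G := by
    rintro _ ⟨y, rfl⟩
    exact hCam.pow_mem_commutator hGp hG hne y
  have hcent : commutator G ≤ centralizer {x} := fun u hu =>
    mem_centralizer_singleton_iff.mpr (mem_center_iff.mp (hG hu) x).symm
  have hcard : Nat.card (centralizer {x}) ≤ Nat.card (commutator G) := by
    have hle : Nat.card G ≤ Nat.card (commutator G) * Nat.card (commutator G) := by
      rw [← powHom.ker.card_mul_index, index_ker]
      exact Nat.mul_le_mul (card_le_of_le hker) (card_le_of_le hrange)
    rw [hCam.card_eq_card_centralizer_mul_card_commutator hG hx] at hle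
    exact Nat.le_of_mul_le_mul_right hle Nat.card_pos
  exact hx ((eq_of_le_of_card_ge hcent hcard) ▸ mem_centralizer_singleton_iff.mpr rfl)

end CaminaCondition

section ClassThree

variable {G : Type*} [Group G]

theorem commutator_le_center_quotient_lowerCentralSeries_two :
    commutator (G ⧸ (⊤ : Subgroup G).lowerCentralSeries 2) ≤ center _ := by
  have hmk := QuotientGroup.mk'_surjective ((⊤ : Subgroup G).lowerCentralSeries 2)
  rw [← commutator_top_right_eq_bot_iff_le_center, ← map_commutator_of_surjective hmk,
    ← map_top_of_surjective _ hmk, ← map_commutator]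
  exact QuotientGroup.map_mk'_self _

theorem lowerCentralSeries_two_le_center (h3 : (⊤ : Subgroup G).lowerCentralSeries 3 = ⊥) :
    (⊤ : Subgroup G).lowerCentralSeries 2 ≤ center G :=
  commutator_top_right_eq_bot_iff_le_center.mp h3

theorem commutator_commutator_eq_bot (h3 : (⊤ : Subgroup G).lowerCentralSeries 3 = ⊥) :
    ⁅commutator G, commutator G⁆ = ⊥ :=
  commutator_commutator_eq_bot_of_rotate (by rw [commutator_comm ⊤]; exact h3) h3

theorem commutator_quotient_lowerCentralSeries_two_ne_bot
    (h3 : (⊤ : Subgroup G).lowerCentralSeries 3 = ⊥)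
    (h2 : (⊤ : Subgroup G).lowerCentralSeries 2 ≠ ⊥) :
    commutator (G ⧸ (⊤ : Subgroup G).lowerCentralSeries 2) ≠ ⊥ := by
  rw [← map_commutator_of_surjective (QuotientGroup.mk'_surjective _), Ne,
    Subgroup.map_eq_bot_iff, QuotientGroup.ker_mk']
  exact fun h => h2 (eq_bot_iff.mpr ((commutator_mono h le_rfl).trans h3.le))

theorem pow_eq_one_of_mem_lowerCentralSeries_two {p : ℕ}
    (h3 : (⊤ : Subgroup G).lowerCentralSeries 3 = ⊥)
    (hpow : ∀ u ∈ commutator G, u ^ p ∈ (⊤ : Subgroup G).lowerCentralSeries 2) {z : G}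
    (hz : z ∈ (⊤ : Subgroup G).lowerCentralSeries 2) : z ^ p = 1 := by
  have hcen := lowerCentralSeries_two_le_center h3
  induction hz using closure_induction with
  | mem _ hz =>
    obtain ⟨v, hv, s, -, rfl⟩ := hz
    have hvs : Commute v ⁅v, s⁆ :=
      mem_center_iff.mp (hcen (commutator_mem_commutator hv (mem_top s))) v
    rw [← commutatorElement_pow_left_of_commute hvs, commutatorElement_eq_one_iff_commute]
    exact (mem_center_iff.mp (hcen (hpow v hv)) s).symm
  | one => exact one_pow p
  | mul x y hx _ ihx ihy =>
    rw [Commute.mul_pow (mem_center_iff.mp (hcen hx) y).symm, ihx, ihy, one_mul]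
  | inv x _ ih => rw [inv_pow, ih, inv_one]

theorem CaminaCondition.pow_eq_one_of_mem_commutator_of_lowerCentralSeries_three_eq_bot {p : ℕ}
    (hCam : CaminaCondition G) (hp : Odd p) (h3 : (⊤ : Subgroup G).lowerCentralSeries 3 = ⊥)
    (hN : ∀ z ∈ (⊤ : Subgroup G).lowerCentralSeries 2, z ^ p = 1) {y : G}
    (hy : y ∉ commutator G) (hyp : y ^ p ∈ (⊤ : Subgroup G).lowerCentralSeries 2) {u : G}
    (hu : u ∈ commutator G) : u ^ p = 1 := by
  have hcen := lowerCentralSeries_two_le_center h3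
  obtain ⟨t, htu⟩ := hCam y hy u hu
  have hz : ⁅y, u⁆ ∈ (⊤ : Subgroup G).lowerCentralSeries 2 := by
    rw [Subgroup.lowerCentralSeries_succ, top_lowerCentralSeries_one, commutator_comm]
    exact commutator_mem_commutator (mem_top y) hu
  have hzc := mem_center_iff.mp (hcen hz)
  have hconj : t * y ^ p * t⁻¹ = u ^ p * y ^ p :=
    calc t * y ^ p * t⁻¹ = (u * y) ^ p := by
          rw [← conj_pow, ← htu, commutatorElement_def, inv_mul_cancel_right]
      _ = ⁅y, u⁆ ^ p.choose 2 * u ^ p * y ^ p :=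
          mul_pow_eq_commutatorElement_pow_choose_two_mul (hzc u).symm (hzc y).symm p
      _ = u ^ p * y ^ p := by rw [pow_choose_two_eq_one_of_odd hp (hN _ hz), one_mul]
  rw [mem_center_iff.mp (hcen hyp) t, mul_inv_cancel_right] at hconj
  exact mul_eq_right.mp hconj.symm

end ClassThree

theorem stmt_12_general {p : ℕ} (hodd : Odd p) {P : Type*} [Group P] [Finite P]
    (hP : IsPGroup p P) (hCam : IsCamina P)
    (hclass3 : (⊤ : Subgroup P).lowerCentralSeries 3 = ⊥ ∧ (⊤ : Subgroup P).lowerCentralSeries 2 ≠ ⊥) :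
    (∀ x ∈ commutator P, x ^ p = 1) ∧
      ∀ x ∈ commutator P, ∀ y ∈ commutator P, x * y = y * x := by
  obtain ⟨h3, h2⟩ := hclass3
  set N := (⊤ : Subgroup P).lowerCentralSeries 2
  have hmk := QuotientGroup.mk'_surjective N
  have hQ := hCam.caminaCondition.of_surjective hmk
  have hQp := hP.to_quotient N
  have hQcen := commutator_le_center_quotient_lowerCentralSeries_two (G := P)
  have hQne := commutator_quotient_lowerCentralSeries_two_ne_bot h3 h2
  have hmem {x : P} (hx : x ∈ commutator P) : (x : P ⧸ N) ∈ commutator (P ⧸ N) :=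
    map_commutator_of_surjective hmk ▸ mem_map_of_mem _ hx
  have hpowN (u : P) (hu : u ∈ commutator P) : u ^ p ∈ N := by
    rw [← QuotientGroup.eq_one_iff, QuotientGroup.mk_pow]
    exact hQ.pow_eq_one_of_mem_commutator hQp hQcen hQne (hmem hu)
  obtain ⟨y, hy, hyp⟩ := hQ.exists_notMem_commutator_pow_eq_one hodd hQp hQcen hQne
  obtain ⟨y, rfl⟩ := hmk y
  rw [← map_pow, QuotientGroup.mk'_apply, QuotientGroup.eq_one_iff] at hyp
  refine ⟨fun u hu => ?_, fun u hu v hv => ?_⟩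
  · exact hCam.caminaCondition.pow_eq_one_of_mem_commutator_of_lowerCentralSeries_three_eq_bot
      hodd h3 (fun z => pow_eq_one_of_mem_lowerCentralSeries_two h3 hpowN) (fun h => hy (hmem h))
      hyp hu
  · exact mem_centralizer_iff.mp
      (commutator_eq_bot_iff_le_centralizer.mp (commutator_commutator_eq_bot h3) hv) u hu

/-- If `P` is a Camina `p`-group of nilpotence class 3 with `p` odd and cyclic
center, then `P'` is elementary abelian. -/
theorem stmt_12 {p : ℕ} [Fact p.Prime] (hodd : Odd p) {P : Type*} [Group P] [Finite P]
    (hP : IsPGroup p P) (hCam : IsCamina P)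
    (hclass3 : (⊤ : Subgroup P).lowerCentralSeries 3 = ⊥ ∧ (⊤ : Subgroup P).lowerCentralSeries 2 ≠ ⊥)
    (hZ : IsCyclic (Subgroup.center P)) :
    (∀ x ∈ commutator P, x ^ p = 1) ∧
      ∀ x ∈ commutator P, ∀ y ∈ commutator P, x * y = y * x :=
  stmt_12_general hodd hP hCam hclass3
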